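/- Let a, b, c be nonzero integers such that −ab is not a perfect square and gcd(a, b, c) = 1. Then X, Y ∈ M₂(ℤ) satisfy aX² + bY² = cI and XY = YX if and only if one of the following holds: (i) X = t₁I and Y = t₂I for integers t₁, t₂ with a·t₁² + b·t₂² = c; (ii) X = t₁I and Y = [[t₄, t₂],[t₃, −t₄]] for integers t₁, t₂, t₃, t₄ with a·t₁² + b(t₄² + t₂t₃) = c; (iii) there exist integers t₁, t₂, t₃, t₄, u, v with u ≠ c, g = gcd(va, u − c), such that c divides u·t₁ + v·b·t₄ and c divides v·a·t₁ − u·t₄, X = [[t₁, ((u−c)/g)·t₂],[((u−c)/g)·t₃, (u·t₁ + v·b·t₄)/c]], Y = [[t₄, (va/g)·t₂],[(va/g)·t₃, (v·a·t₁ − u·t₄)/c]], and the relations u² + abv² = c² and g²(a·t₁² + b·t₄²) + 2ac·t₂t₃·(c − u) = c·g² hold. -/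

import Mathlib

/-!
If `X` is not scalar, a matrix commuting with it is a polynomial in it; over `ℤ` this reads
`X = α + d F`, `Y = β + s F` with `F = !![f₁, f₂; f₃, 0]` and `d ≠ 0` (take `d` a gcd of
`X₀₀ - X₁₁, X₀₁, X₁₀`). Since `1` and `F` are independent and `F² = f₁ F + f₂ f₃`, the equation
`a X² + b Y² = c` splits into two scalar equations. As `-ab` is not a square, `a d² + b s² ≠ 0`,
and these equations make `c` times the rational point
`((b s² - a d²), -2 d s) / (a d² + b s²)` of `U² + a b V² = 1` integral: this is `(u, v)`, and the
direction `(d : s) = (u - c : v a)` fixes the off-diagonal entries up to the factor `t₂, t₃`.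
When `X` is scalar, Cayley–Hamilton forces a non-scalar `Y` to be traceless.
-/

open Matrix

theorem Int.mul_sq_add_mul_sq_ne_zero {a b s t : ℤ} (hab : ¬∃ r : ℤ, -(a * b) = r ^ 2)
    (hs : s ≠ 0) : a * s ^ 2 + b * t ^ 2 ≠ 0 := by
  intro h
  have ha : a ≠ 0 := by rintro rfl; exact hab ⟨0, by ring⟩
  rcases eq_or_ne t 0 with rfl | ht
  · simp_all
  · have hsq : (a * s) ^ 2 = -(a * b) * t ^ 2 := by linear_combination a * h
    obtain ⟨r, hr⟩ : t ∣ a * s :=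
      (Int.pow_dvd_pow_iff two_ne_zero).1 ⟨_, hsq.trans (mul_comm _ _)⟩
    exact hab ⟨r, mul_right_cancel₀ (pow_ne_zero 2 ht) (by rw [← hsq, hr]; ring)⟩

theorem Int.exists_eq_ediv_gcd_mul {p q d s : ℤ} (hq : q ≠ 0) (h : p * d = q * s) :
    ∃ k, d = q / p.gcd q * k ∧ s = p / p.gcd q * k := by
  have hg : 0 < p.gcd q := Int.gcd_pos_of_ne_zero_right p hq
  set m := q / p.gcd q
  set n := p / p.gcd q
  have hm : (p.gcd q : ℤ) * m = q := Int.mul_ediv_cancel' (Int.gcd_dvd_right p q)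
  have hn : (p.gcd q : ℤ) * n = p := Int.mul_ediv_cancel' (Int.gcd_dvd_left p q)
  have hmn : IsCoprime m n :=
    Int.isCoprime_iff_gcd_eq_one.2 (by rw [Int.gcd_comm]; exact Int.gcd_div_gcd_div_gcd hg)
  have hm0 : m ≠ 0 := by rintro h0; simp [h0, hq.symm] at hm
  have hnd : n * d = m * s :=
    mul_left_cancel₀ (Int.natCast_ne_zero.2 hg.ne') (by linear_combination d * hn - s * hm + h)
  obtain ⟨k, hk⟩ := hmn.dvd_of_dvd_mul_left ⟨s, hnd⟩
  exact ⟨k, hk, mul_left_cancel₀ hm0 (by linear_combination -hnd + n * hk)⟩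

section

variable {R : Type*} [CommRing R]

theorem exists_dotProduct_eq_and_eq_smul [IsPrincipalIdealRing R] {n : ℕ} (p : Fin n → R) :
    ∃ (d : R) (A f : Fin n → R), A ⬝ᵥ p = d ∧ p = d • f := by
  obtain ⟨d, hd⟩ := Submodule.IsPrincipal.principal (Ideal.span (Set.range p))
  have hmem : d ∈ Ideal.span (Set.range p) := hd ▸ Ideal.mem_span_singleton_self d
  obtain ⟨A, hA⟩ := Ideal.mem_span_range_iff_exists_fun.1 hmem
  have hdvd : ∀ i, d ∣ p i := fun i =>
    Ideal.mem_span_singleton.1 (by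
      rw [← Ideal.submodule_span_eq, ← hd]; exact Ideal.subset_span ⟨i, rfl⟩)
  choose f hf using hdvd
  exact ⟨d, A, f, by simpa [dotProduct, mul_comm] using hA, funext hf⟩

theorem eq_smul_of_cross_eq_zero [IsDomain R] {p q f A : Fin 3 → R} {d : R} (hd : d ≠ 0)
    (hA : A ⬝ᵥ p = d) (hp : p = d • f) (hpq : p ⨯₃ q = 0) : q = (A ⬝ᵥ q) • f := by
  have key := cross_cross_eq_smul_sub_smul' A p q
  rw [hpq, map_zero, dotProduct_comm p, hA, eq_comm, sub_eq_zero, hp, smul_comm] at key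
  ext i
  exact mul_left_cancel₀ hd (by simpa using congrFun key.symm i)

namespace Matrix

/-- The coordinates of `A - A 1 1 • 1`; two matrices commute iff these vectors are parallel. -/
def offScalar (A : Matrix (Fin 2) (Fin 2) R) : Fin 3 → R :=
  ![A 0 0 - A 1 1, A 0 1, A 1 0]

theorem offScalar_cross_offScalar (A B : Matrix (Fin 2) (Fin 2) R) :
    A.offScalar ⨯₃ B.offScalar =
      ![(A * B - B * A) 0 0, (A * B - B * A) 1 0, (A * B - B * A) 0 1] := by
  ext i
  fin_cases i <;> simp [offScalar, cross_apply, mul_apply] <;> ring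

theorem eq_smul_one_add_smul_of_offScalar_eq {A : Matrix (Fin 2) (Fin 2) R} {d : R}
    {f : Fin 3 → R} (h : A.offScalar = d • f) :
    A = A 1 1 • 1 + d • !![f 0, f 1; f 2, 0] := by
  have h0 := congrFun h 0
  have h1 := congrFun h 1
  have h2 := congrFun h 2
  simp only [offScalar, Fin.isValue, cons_val_zero, Pi.smul_apply, smul_eq_mul, cons_val_one,
    cons_val] at h0 h1 h2
  rw [A.eta_fin_two]
  ext i j
  fin_cases i <;> fin_cases j <;> simp [← h1, ← h2, ← h0]

theorem exists_eq_smul_one_add_smul_of_commute [IsDomain R] [IsPrincipalIdealRing R]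
    {X Y : Matrix (Fin 2) (Fin 2) R} (hXY : X * Y = Y * X) (hX : ¬∃ t : R, X = t • 1) :
    ∃ (d s : R) (f : Fin 3 → R), d ≠ 0 ∧ X = X 1 1 • 1 + d • !![f 0, f 1; f 2, 0] ∧
      Y = Y 1 1 • 1 + s • !![f 0, f 1; f 2, 0] := by
  obtain ⟨d, A, f, hA, hf⟩ := exists_dotProduct_eq_and_eq_smul X.offScalar
  have hd : d ≠ 0 := by
    rintro rfl
    exact hX ⟨X 1 1, by simpa using eq_smul_one_add_smul_of_offScalar_eq hf⟩
  have hcross : X.offScalar ⨯₃ Y.offScalar = 0 := by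
    rw [offScalar_cross_offScalar, hXY, sub_self]
    simp
  exact ⟨d, A ⬝ᵥ Y.offScalar, f, hd, eq_smul_one_add_smul_of_offScalar_eq hf,
    eq_smul_one_add_smul_of_offScalar_eq (eq_smul_of_cross_eq_zero hd hA hf hcross)⟩

theorem sq_fin_two_eq_trace_smul_sub_det_smul (A : Matrix (Fin 2) (Fin 2) R) :
    A ^ 2 = A.trace • A - A.det • 1 := by
  rw [A.eta_fin_two]
  ext i j
  fin_cases i <;> fin_cases j <;> simp [sq, mul_apply, det_fin_two] <;> ring

theorem linearIndependent_one_of_not_scalar [IsDomain R] {A : Matrix (Fin 2) (Fin 2) R}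
    (hA : ¬∃ t : R, A = t • 1) : LinearIndependent R ![1, A] := by
  refine LinearIndependent.pair_iff.2 fun s t h => ?_
  have h00 := congrFun (congrFun h 0) 0
  have h01 := congrFun (congrFun h 0) 1
  have h10 := congrFun (congrFun h 1) 0
  have h11 := congrFun (congrFun h 1) 1
  simp only [Fin.isValue, add_apply, smul_apply, one_apply_eq, smul_eq_mul, mul_one, zero_apply,
    ne_eq, zero_ne_one, not_false_eq_true, one_apply_ne, mul_zero, zero_add, mul_eq_zero,
    one_ne_zero] at h00 h01 h10 h11
  rcases eq_or_ne t 0 with rfl | ht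
  · simp_all
  · refine absurd ⟨A 0 0, ?_⟩ hA
    have h11' : A 1 1 = A 0 0 := mul_left_cancel₀ ht (by linear_combination h11 - h00)
    rw [A.eta_fin_two, h01.resolve_left ht, h10.resolve_left ht, h11']
    ext i j
    fin_cases i <;> fin_cases j <;> simp

theorem smul_sq_add_smul_sq_eq (a b α β d s : R) (F : Matrix (Fin 2) (Fin 2) R) :
    a • (α • 1 + d • F) ^ 2 + b • (β • 1 + s • F) ^ 2 =
      (a * α ^ 2 + b * β ^ 2 - (a * d ^ 2 + b * s ^ 2) * F.det) • 1 +
        (2 * (a * α * d + b * β * s) + (a * d ^ 2 + b * s ^ 2) * F.trace) • F := by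
  have hF := F.sq_fin_two_eq_trace_smul_sub_det_smul
  rw [sq] at hF
  simp only [sq, add_mul, mul_add, one_mul, mul_one, smul_mul_assoc, mul_smul_comm, hF]
  module

theorem exists_eq_traceless_of_smul_sq_add_smul_sq [IsDomain R] {a b c t : R}
    {Y : Matrix (Fin 2) (Fin 2) R} (hb : b ≠ 0) (hY : ¬∃ s : R, Y = s • 1)
    (h : a • (t • (1 : Matrix (Fin 2) (Fin 2) R)) ^ 2 + b • Y ^ 2 = c • 1) :
    ∃ t₂ t₃ t₄ : R, Y = !![t₄, t₂; t₃, -t₄] ∧ a * t ^ 2 + b * (t₄ ^ 2 + t₂ * t₃) = c := by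
  have hsplit : (a * t ^ 2 - b * Y.det) • 1 + (b * Y.trace) • Y = c • 1 + (0 : R) • Y := by
    rw [← h, Y.sq_fin_two_eq_trace_smul_sub_det_smul, smul_pow, one_pow]
    module
  obtain ⟨hdet, htr⟩ := (linearIndependent_one_of_not_scalar hY).eq_of_pair hsplit
  have h11 : Y 1 1 = -Y 0 0 := by
    rw [trace_fin_two, mul_eq_zero, or_iff_right hb] at htr
    linear_combination htr
  refine ⟨Y 0 1, Y 1 0, Y 0 0, by rw [← h11]; exact Y.eta_fin_two, ?_⟩
  rw [det_fin_two, h11] at hdet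
  linear_combination hdet

theorem sq_traceless (p q r : R) : !![p, q; r, -p] ^ 2 = (p ^ 2 + q * r) • 1 := by
  rw [sq_fin_two_eq_trace_smul_sub_det_smul, trace_fin_two_of, det_fin_two_of, add_neg_cancel]
  module

end Matrix

end

/-- The solutions of type (iii) in `stmt_12`. -/
def IsSolutionOfTypeThree (a b c : ℤ) (X Y : Matrix (Fin 2) (Fin 2) ℤ) : Prop :=
  ∃ t₁ t₂ t₃ t₄ u v g : ℤ, u ≠ c ∧ g = Int.gcd (v * a) (u - c) ∧
    c ∣ (u * t₁ + v * b * t₄) ∧ c ∣ (v * a * t₁ - u * t₄) ∧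
    X = !![t₁, ((u - c) / g) * t₂; ((u - c) / g) * t₃, (u * t₁ + v * b * t₄) / c] ∧
    Y = !![t₄, (v * a / g) * t₂; (v * a / g) * t₃, (v * a * t₁ - u * t₄) / c] ∧
    u ^ 2 + a * b * v ^ 2 = c ^ 2 ∧
    g ^ 2 * (a * t₁ ^ 2 + b * t₄ ^ 2) + 2 * a * c * t₂ * t₃ * (c - u) = c * g ^ 2

theorem exists_conic_point {a b c α β d s f₁ f₂ f₃ : ℤ} (ha : a ≠ 0) (hc : c ≠ 0) (hd : d ≠ 0)
    (hH : a * d ^ 2 + b * s ^ 2 ≠ 0)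
    (h₁ : a * α ^ 2 + b * β ^ 2 + (a * d ^ 2 + b * s ^ 2) * (f₂ * f₃) = c)
    (h₂ : 2 * (a * α * d + b * β * s) + (a * d ^ 2 + b * s ^ 2) * f₁ = 0) :
    ∃ u v : ℤ, u ^ 2 + a * b * v ^ 2 = c ^ 2 ∧ u ≠ c ∧ v * a * d = (u - c) * s ∧
      u * (α + d * f₁) + v * b * (β + s * f₁) = c * α ∧
      v * a * (α + d * f₁) - u * (β + s * f₁) = c * β := by
  -- `(u, v) = c (b s² - a d², -2 d s) / (a d² + b s²)`, rewritten with `h₁` and `h₂`.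
  set u := c - (2 * (f₂ * f₃ * a * d ^ 2 + b * β ^ 2 + b * β * s * f₁) -
    f₁ * (a * α * d + b * β * s))
  set v := -(2 * (f₂ * f₃ * d * s - α * β) - f₁ * (β * d + α * s))
  have hu : (a * d ^ 2 + b * s ^ 2) * u = (a * d ^ 2 + b * s ^ 2) * c - 2 * a * c * d ^ 2 := by
    linear_combination (-2 * a * d ^ 2) * h₁ + (a * α * d - b * β * s) * h₂
  have hv : (a * d ^ 2 + b * s ^ 2) * v = -(2 * c * d * s) := by
    linear_combination (-2 * d * s) * h₁ + (β * d + α * s) * h₂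
  refine ⟨u, v, ?_, ?_, ?_, ?_, ?_⟩
  · refine mul_left_cancel₀ (pow_ne_zero 2 hH) ?_
    linear_combination ((a * d ^ 2 + b * s ^ 2) * u + (a * d ^ 2 + b * s ^ 2) * c -
      2 * a * c * d ^ 2) * hu + a * b * ((a * d ^ 2 + b * s ^ 2) * v - 2 * c * d * s) * hv
  · intro huc
    rw [huc] at hu
    exact mul_ne_zero (mul_ne_zero ha hc) (pow_ne_zero 2 hd) (by linarith)
  · exact mul_left_cancel₀ hH (by linear_combination a * d * hv - s * hu)
  · refine mul_left_cancel₀ hH ?_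
    linear_combination (α + d * f₁) * hu + b * (β + s * f₁) * hv + (-c * d) * h₂
  · refine mul_left_cancel₀ hH ?_
    linear_combination a * (α + d * f₁) * hv - (β + s * f₁) * hu + (-c * s) * h₂

theorem isSolutionOfTypeThree_of_decomposition {a b c α β d s f₁ f₂ f₃ : ℤ} (ha : a ≠ 0)
    (hc : c ≠ 0) (hab : ¬∃ r : ℤ, -(a * b) = r ^ 2) (hd : d ≠ 0)
    (h₁ : a * α ^ 2 + b * β ^ 2 + (a * d ^ 2 + b * s ^ 2) * (f₂ * f₃) = c)
    (h₂ : 2 * (a * α * d + b * β * s) + (a * d ^ 2 + b * s ^ 2) * f₁ = 0) :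
    IsSolutionOfTypeThree a b c (α • 1 + d • !![f₁, f₂; f₃, 0])
      (β • 1 + s • !![f₁, f₂; f₃, 0]) := by
  obtain ⟨u, v, hq, huc, hdir, hα, hβ⟩ :=
    exists_conic_point ha hc hd (Int.mul_sq_add_mul_sq_ne_zero hab hd) h₁ h₂
  obtain ⟨k, hdk, hsk⟩ := Int.exists_eq_ediv_gcd_mul (sub_ne_zero.2 huc) hdir
  set g : ℤ := (Int.gcd (v * a) (u - c) : ℤ)
  have hM : g * ((u - c) / g) = u - c := Int.mul_ediv_cancel' (Int.gcd_dvd_right _ _)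
  have hN : g * (v * a / g) = v * a := Int.mul_ediv_cancel' (Int.gcd_dvd_left _ _)
  refine ⟨α + d * f₁, k * f₂, k * f₃, β + s * f₁, u, v, g, huc, rfl, ⟨α, hα⟩, ⟨β, hβ⟩,
    ?_, ?_, hq, ?_⟩
  · rw [hα, Int.mul_ediv_cancel_left _ hc]
    ext i j
    fin_cases i <;> fin_cases j <;> simp [Matrix.intCast_apply, hdk] <;> ring
  · rw [hβ, Int.mul_ediv_cancel_left _ hc]
    ext i j
    fin_cases i <;> fin_cases j <;> simp [Matrix.intCast_apply, hsk] <;> ring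
  · subst hdk hsk
    linear_combination g ^ 2 * h₁ + g ^ 2 * f₁ * h₂ - k ^ 2 * f₂ * f₃ *
      (a * (g * ((u - c) / g) + (u - c)) * hM + b * (g * (v * a / g) + v * a) * hN + a * hq)

theorem isSolutionOfTypeThree_of_not_scalar {a b c : ℤ} (ha : a ≠ 0) (hc : c ≠ 0)
    (hab : ¬∃ r : ℤ, -(a * b) = r ^ 2) {X Y : Matrix (Fin 2) (Fin 2) ℤ}
    (hsum : a • X ^ 2 + b • Y ^ 2 = c • 1) (hXY : X * Y = Y * X) (hX : ¬∃ t : ℤ, X = t • 1) :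
    IsSolutionOfTypeThree a b c X Y := by
  obtain ⟨d, s, f, hd, hXd, hYd⟩ := exists_eq_smul_one_add_smul_of_commute hXY hX
  have hF : ¬∃ t : ℤ, !![f 0, f 1; f 2, 0] = t • 1 := by
    rintro ⟨t, ht⟩
    exact hX ⟨X 1 1 + d * t, hXd.trans (by rw [ht, smul_smul, ← add_smul])⟩
  rw [hXd, hYd, smul_sq_add_smul_sq_eq, ← add_zero (c • 1), ← zero_smul ℤ !![f 0, f 1; f 2, 0]]
    at hsum
  obtain ⟨h₁, h₂⟩ := (linearIndependent_one_of_not_scalar hF).eq_of_pair hsum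
  rw [det_fin_two_of, mul_zero, zero_sub, mul_neg, sub_neg_eq_add] at h₁
  rw [trace_fin_two_of, add_zero] at h₂
  rw [hXd, hYd]
  exact isSolutionOfTypeThree_of_decomposition ha hc hab hd h₁ h₂

section TypeThree

variable {a b c g M N W Z t₁ t₂ t₃ t₄ u v : ℤ}

theorem typeThree_commute (hg : g ≠ 0) (hc : c ≠ 0) (hM : g * M = u - c) (hN : g * N = v * a)
    (hW : c * W = u * t₁ + v * b * t₄) (hZ : c * Z = v * a * t₁ - u * t₄)
    (hq : u ^ 2 + a * b * v ^ 2 = c ^ 2) :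
    !![t₁, M * t₂; M * t₃, W] * !![t₄, N * t₂; N * t₃, Z] =
      !![t₄, N * t₂; N * t₃, Z] * !![t₁, M * t₂; M * t₃, W] := by
  have hgc : g * c ≠ 0 := mul_ne_zero hg hc
  rw [mul_fin_two, mul_fin_two]
  ext i j
  fin_cases i <;> fin_cases j <;>
    simp only [Fin.zero_eta, Fin.mk_one, of_apply, cons_val', cons_val_zero, cons_val_one,
      empty_val', cons_val_fin_one]
  · ring
  · refine mul_left_cancel₀ hgc ?_
    linear_combination c * t₂ * (t₁ - W) * hN + c * t₂ * (Z - t₄) * hM + t₂ * (u - c) * hZ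
      - t₂ * v * a * hW - t₂ * t₄ * hq
  · refine mul_left_cancel₀ hgc ?_
    linear_combination -c * t₃ * (t₁ - W) * hN - c * t₃ * (Z - t₄) * hM - t₃ * (u - c) * hZ
      + t₃ * v * a * hW + t₃ * t₄ * hq
  · ring

theorem typeThree_smul_sq_add_smul_sq (hg : g ≠ 0) (hc : c ≠ 0) (hM : g * M = u - c)
    (hN : g * N = v * a) (hW : c * W = u * t₁ + v * b * t₄) (hZ : c * Z = v * a * t₁ - u * t₄)
    (hq : u ^ 2 + a * b * v ^ 2 = c ^ 2)
    (hE : g ^ 2 * (a * t₁ ^ 2 + b * t₄ ^ 2) + 2 * a * c * t₂ * t₃ * (c - u) = c * g ^ 2) :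
    a • !![t₁, M * t₂; M * t₃, W] ^ 2 + b • !![t₄, N * t₂; N * t₃, Z] ^ 2 = c • 1 := by
  have hgc : g * c ≠ 0 := mul_ne_zero hg hc
  rw [sq, sq, mul_fin_two, mul_fin_two, one_fin_two]
  ext i j
  fin_cases i <;> fin_cases j <;>
    simp only [smul_of, smul_cons, Int.zsmul_eq_mul, smul_empty, Fin.zero_eta, Fin.isValue,
      Fin.mk_one, Matrix.add_apply, of_apply, cons_val', cons_val_zero, cons_val_one,
      cons_val_fin_one, Matrix.smul_apply, mul_one, mul_zero]
  · refine mul_left_cancel₀ (pow_ne_zero 2 hg) ?_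
    linear_combination hE + a * t₂ * t₃ * hq + a * t₂ * t₃ * (g * M + u - c) * hM
      + b * t₂ * t₃ * (g * N + v * a) * hN
  · refine mul_left_cancel₀ hgc ?_
    linear_combination a * t₂ * (c * t₁ + c * W) * hM + b * t₂ * (c * t₄ + c * Z) * hN
      + a * t₂ * (u - c) * hW + b * t₂ * (v * a) * hZ + a * t₁ * t₂ * hq
  · refine mul_left_cancel₀ hgc ?_
    linear_combination a * t₃ * (c * t₁ + c * W) * hM + b * t₃ * (c * t₄ + c * Z) * hN
      + a * t₃ * (u - c) * hW + b * t₃ * (v * a) * hZ + a * t₁ * t₃ * hq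
  · refine mul_left_cancel₀ (pow_ne_zero 2 (mul_ne_zero hc hg)) ?_
    linear_combination c ^ 2 * hE + (g ^ 2 * (a * t₁ ^ 2 + b * t₄ ^ 2) + c ^ 2 * a * t₂ * t₃) * hq
      + c ^ 2 * a * t₂ * t₃ * (g * M + u - c) * hM + c ^ 2 * b * t₂ * t₃ * (g * N + v * a) * hN
      + a * g ^ 2 * (c * W + u * t₁ + v * b * t₄) * hW
      + b * g ^ 2 * (c * Z + v * a * t₁ - u * t₄) * hZ

end TypeThree

theorem IsSolutionOfTypeThree.smul_sq_add_smul_sq_and_commute {a b c : ℤ}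
    {X Y : Matrix (Fin 2) (Fin 2) ℤ} (hc : c ≠ 0) (h : IsSolutionOfTypeThree a b c X Y) :
    a • X ^ 2 + b • Y ^ 2 = c • 1 ∧ X * Y = Y * X := by
  obtain ⟨t₁, t₂, t₃, t₄, u, v, g, huc, rfl, hW, hZ, rfl, rfl, hq, hE⟩ := h
  have hg : (Int.gcd (v * a) (u - c) : ℤ) ≠ 0 :=
    Int.natCast_ne_zero.2 (Int.gcd_pos_of_ne_zero_right _ (sub_ne_zero.2 huc)).ne'
  have hM := Int.mul_ediv_cancel' (Int.gcd_dvd_right (v * a) (u - c))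
  have hN := Int.mul_ediv_cancel' (Int.gcd_dvd_left (v * a) (u - c))
  have hW := Int.mul_ediv_cancel' hW
  have hZ := Int.mul_ediv_cancel' hZ
  exact ⟨typeThree_smul_sq_add_smul_sq hg hc hM hN hW hZ hq hE,
    typeThree_commute hg hc hM hN hW hZ hq⟩

theorem stmt_12_general (a b c : ℤ) (ha : a ≠ 0) (hb : b ≠ 0) (hc : c ≠ 0)
    (hnsq : ¬ ∃ s : ℤ, -(a * b) = s ^ 2)
    (X Y : Matrix (Fin 2) (Fin 2) ℤ) :
    (a • X ^ 2 + b • Y ^ 2 = c • (1 : Matrix (Fin 2) (Fin 2) ℤ) ∧ X * Y = Y * X) ↔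
    ((∃ t₁ t₂ : ℤ, X = t₁ • (1 : Matrix (Fin 2) (Fin 2) ℤ) ∧
        Y = t₂ • (1 : Matrix (Fin 2) (Fin 2) ℤ) ∧ a * t₁ ^ 2 + b * t₂ ^ 2 = c) ∨
     (∃ t₁ t₂ t₃ t₄ : ℤ, X = t₁ • (1 : Matrix (Fin 2) (Fin 2) ℤ) ∧
        Y = !![t₄, t₂; t₃, -t₄] ∧ a * t₁ ^ 2 + b * (t₄ ^ 2 + t₂ * t₃) = c) ∨
     (∃ t₁ t₂ t₃ t₄ u v g : ℤ, u ≠ c ∧ g = Int.gcd (v * a) (u - c) ∧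
        c ∣ (u * t₁ + v * b * t₄) ∧ c ∣ (v * a * t₁ - u * t₄) ∧
        X = !![t₁, ((u - c) / g) * t₂; ((u - c) / g) * t₃, (u * t₁ + v * b * t₄) / c] ∧
        Y = !![t₄, (v * a / g) * t₂; (v * a / g) * t₃, (v * a * t₁ - u * t₄) / c] ∧
        u ^ 2 + a * b * v ^ 2 = c ^ 2 ∧
        g ^ 2 * (a * t₁ ^ 2 + b * t₄ ^ 2) + 2 * a * c * t₂ * t₃ * (c - u) = c * g ^ 2)) := by
  constructor
  · rintro ⟨hsum, hXY⟩
    by_cases hX : ∃ t : ℤ, X = t • 1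
    · obtain ⟨t₁, rfl⟩ := hX
      by_cases hY : ∃ t : ℤ, Y = t • 1
      · obtain ⟨t₂, rfl⟩ := hY
        refine Or.inl ⟨t₁, t₂, rfl, rfl, ?_⟩
        rw [smul_pow, smul_pow, one_pow, smul_smul, smul_smul, ← add_smul] at hsum
        simpa only [Matrix.smul_apply, one_apply_eq, smul_eq_mul, mul_one]
          using congrFun (congrFun hsum 0) 0
      · obtain ⟨t₂, t₃, t₄, rfl, h⟩ := exists_eq_traceless_of_smul_sq_add_smul_sq hb hY hsum
        exact Or.inr (Or.inl ⟨t₁, t₂, t₃, t₄, rfl, rfl, h⟩)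
    · exact Or.inr (Or.inr (isSolutionOfTypeThree_of_not_scalar ha hc hnsq hsum hXY hX))
  · rintro (⟨t₁, t₂, rfl, rfl, h⟩ | ⟨t₁, t₂, t₃, t₄, rfl, rfl, h⟩ | h)
    · refine ⟨?_, ((Commute.one_left _).smul_left t₁).eq⟩
      rw [smul_pow, smul_pow, one_pow, ← h]
      module
    · refine ⟨?_, ((Commute.one_left _).smul_left t₁).eq⟩
      rw [sq_traceless, smul_pow, one_pow, ← h]
      module
    · exact IsSolutionOfTypeThree.smul_sq_add_smul_sq_and_commute hc h

theorem stmt_12 (a b c : ℤ) (ha : a ≠ 0) (hb : b ≠ 0) (hc : c ≠ 0)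
    (hnsq : ¬ ∃ s : ℤ, -(a * b) = s ^ 2) (hgcd : Int.gcd a (Int.gcd b c) = 1)
    (X Y : Matrix (Fin 2) (Fin 2) ℤ) :
    (a • X ^ 2 + b • Y ^ 2 = c • (1 : Matrix (Fin 2) (Fin 2) ℤ) ∧ X * Y = Y * X) ↔
    ((∃ t₁ t₂ : ℤ, X = t₁ • (1 : Matrix (Fin 2) (Fin 2) ℤ) ∧
        Y = t₂ • (1 : Matrix (Fin 2) (Fin 2) ℤ) ∧ a * t₁ ^ 2 + b * t₂ ^ 2 = c) ∨
     (∃ t₁ t₂ t₃ t₄ : ℤ, X = t₁ • (1 : Matrix (Fin 2) (Fin 2) ℤ) ∧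
        Y = !![t₄, t₂; t₃, -t₄] ∧ a * t₁ ^ 2 + b * (t₄ ^ 2 + t₂ * t₃) = c) ∨
     (∃ t₁ t₂ t₃ t₄ u v g : ℤ, u ≠ c ∧ g = Int.gcd (v * a) (u - c) ∧
        c ∣ (u * t₁ + v * b * t₄) ∧ c ∣ (v * a * t₁ - u * t₄) ∧
        X = !![t₁, ((u - c) / g) * t₂; ((u - c) / g) * t₃, (u * t₁ + v * b * t₄) / c] ∧
        Y = !![t₄, (v * a / g) * t₂; (v * a / g) * t₃, (v * a * t₁ - u * t₄) / c] ∧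
        u ^ 2 + a * b * v ^ 2 = c ^ 2 ∧
        g ^ 2 * (a * t₁ ^ 2 + b * t₄ ^ 2) + 2 * a * c * t₂ * t₃ * (c - u) = c * g ^ 2)) :=
  stmt_12_general a b c ha hb hc hnsq X Y
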